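/- Let μ = (√3/3)(i + j + k), w = s(cos(θ/2) + sin(θ/2)·μ) with real s ≠ 0 and θ, and let q be a pure imaginary quaternion identified with a vector in ℝ³. Then (1/s)·w·q·w* = s·R·q⃗, where R is the 3×3 matrix with circulant entries γ1, γ2, γ3 given by γ1 = 1/3 + (2/3)cos θ, γ2 = 1/3 − (2/3)cos(θ − π/3), γ3 = 1/3 − (2/3)cos(θ + π/3), i.e., R = [[γ1, γ2, γ3],[γ3, γ1, γ2],[γ2, γ3, γ1]]. -/

import Mathlib

noncomputable def grayR (θ : ℝ) : Matrix (Fin 3) (Fin 3) ℝ :=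
  let γ1 : ℝ := 1 / 3 + 2 / 3 * Real.cos θ
  let γ2 : ℝ := 1 / 3 - 2 / 3 * Real.cos (θ - Real.pi / 3)
  let γ3 : ℝ := 1 / 3 - 2 / 3 * Real.cos (θ + Real.pi / 3)
  !![γ1, γ2, γ3; γ3, γ1, γ2; γ2, γ3, γ1]

/-- The vector form of a (pure imaginary) quaternion. -/
def qvec (q : Quaternion ℝ) : Fin 3 → ℝ := ![q.imI, q.imJ, q.imK]

theorem quaternion_conv_is_rotation (θ s : ℝ) (hs : s ≠ 0)
    (w q : Quaternion ℝ) (hq : q.re = 0)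
    (hw : w = ⟨s * Real.cos (θ / 2), s * (Real.sin (θ / 2) * (Real.sqrt 3 / 3)),
       s * (Real.sin (θ / 2) * (Real.sqrt 3 / 3)),
       s * (Real.sin (θ / 2) * (Real.sqrt 3 / 3))⟩) :
    ((1 / s) • (w * q * star w)).re = 0 ∧
    qvec ((1 / s) • (w * q * star w)) = s • (grayR θ).mulVec (qvec q) := by
  obtain ⟨a, x, y, z⟩ := q
  simp only [QuaternionAlgebra.re] at hq
  subst hq hw
  have h3 : Real.sqrt 3 * Real.sqrt 3 = 3 := Real.mul_self_sqrt (by norm_num)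
  have hc : Real.cos (θ/2)^2 + Real.sin (θ/2)^2 = 1 := by
    rw [add_comm]; exact Real.sin_sq_add_cos_sq _
  have hcos : Real.cos θ = Real.cos (θ/2)^2 - Real.sin (θ/2)^2 := by
    rw [show θ = θ/2 + θ/2 by ring, Real.cos_add]; ring
  have hsin : Real.sin θ = 2 * Real.sin (θ/2) * Real.cos (θ/2) := by
    rw [show θ = θ/2 + θ/2 by ring, Real.sin_add]; ring
  have hcm : Real.cos (θ - Real.pi/3) = Real.cos θ / 2 + Real.sqrt 3 / 2 * Real.sin θ := by
    rw [Real.cos_sub, Real.cos_pi_div_three, Real.sin_pi_div_three]; ring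
  have hcp : Real.cos (θ + Real.pi/3) = Real.cos θ / 2 - Real.sqrt 3 / 2 * Real.sin θ := by
    rw [Real.cos_add, Real.cos_pi_div_three, Real.sin_pi_div_three]; ring
  set c := Real.cos (θ/2) with hcdef
  set t := Real.sin (θ/2) with htdef
  set r := Real.sqrt 3 with hrdef
  set g1 : ℝ := 1/3 + 2/3 * Real.cos θ with hg1
  set g2 : ℝ := 1/3 - 2/3 * Real.cos (θ - Real.pi/3) with hg2
  set g3 : ℝ := 1/3 - 2/3 * Real.cos (θ + Real.pi/3) with hg3
  have hkey : (⟨s * c, s * (t * (r/3)), s * (t * (r/3)), s * (t * (r/3))⟩ : Quaternion ℝ) *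
      ⟨0, x, y, z⟩ * star ⟨s * c, s * (t * (r/3)), s * (t * (r/3)), s * (t * (r/3))⟩ =
      ⟨0, s^2 * (g1*x + g2*y + g3*z), s^2 * (g3*x + g1*y + g2*z),
        s^2 * (g2*x + g3*y + g1*z)⟩ := by
    rw [hg1, hg2, hg3, hcm, hcp, hcos, hsin]
    rw [show ∀ u v w p : ℝ, (⟨u,v,w,p⟩ : Quaternion ℝ) = QuaternionAlgebra.mk u v w p from fun _ _ _ _ => rfl]
    rw [QuaternionAlgebra.star_mk, QuaternionAlgebra.mk_mul_mk, QuaternionAlgebra.mk_mul_mk,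
      QuaternionAlgebra.mk.injEq]
    refine ⟨?_, ?_, ?_, ?_⟩
    · ring
    · linear_combination (2/9*s^2*t^2*z + 2/9*s^2*t^2*y - 1/9*s^2*t^2*x) * h3 +
        (1/3*s^2*z + 1/3*s^2*y + 1/3*s^2*x) * hc
    · linear_combination (2/9*s^2*t^2*z - 1/9*s^2*t^2*y + 2/9*s^2*t^2*x) * h3 +
        (1/3*s^2*z + 1/3*s^2*y + 1/3*s^2*x) * hc
    · linear_combination (-1/9*s^2*t^2*z + 2/9*s^2*t^2*y + 2/9*s^2*t^2*x) * h3 +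
        (1/3*s^2*z + 1/3*s^2*y + 1/3*s^2*x) * hc
  erw [hkey]
  refine ⟨mul_zero _, ?_⟩
  have e : ∀ a b c d u : ℝ, qvec (u • (⟨a, b, c, d⟩ : Quaternion ℝ)) = ![u * b, u * c, u * d] := fun _ _ _ _ _ => rfl
  erw [e]
  funext i
  fin_cases i <;>
  · simp only [qvec, grayR, Matrix.mulVec, dotProduct, Fin.sum_univ_three,
      Matrix.cons_val', Matrix.cons_val_zero, Matrix.cons_val_one, Matrix.head_cons,
      Matrix.empty_val', Matrix.cons_val_fin_one, Matrix.cons_val_two, Matrix.tail_cons,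
      Pi.smul_apply, smul_eq_mul, Fin.mk_zero, Fin.mk_one, Matrix.of_apply, Fin.reduceFinMk, Matrix.vecHead,
      Quaternion.imI_smul, Quaternion.imJ_smul, Quaternion.imK_smul, QuaternionAlgebra.smul_mk]
    rw [hg1, hg2, hg3]
    field_simp
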